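/- arXiv:0909.3085 — 4 statements merged into one kernel-verified Lean document; each statement's English description precedes it below -/
import Mathlib

section
/- Let a > 0, let f(x) = x·ln(1/x) with inverse f⁻¹ : (0, e⁻¹) → (0, e⁻¹), and g(z) = z/f⁻¹(z). Let λ : I → (0,∞) be twice continuously differentiable on an interval I with λ̇(t)²/a ∈ (0, e⁻¹) for all t ∈ I, and suppose λ(t)·λ̈(t) = a·f⁻¹(λ̇(t)²/a) on I. Then the function t ↦ ln(λ(t)) + (1/4)·(g(λ̇(t)²/a) − 1)² is constant on I. -/
/-!
With `f = negMulLog` and `x = f⁻¹(z)` we have `z = -x log x`, so `g(z) = z / x = -log x` and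
`g(z) - 1 = -(log x + 1)`, while `(f⁻¹)'(z) = -(log x + 1)⁻¹`. The chain rule then gives
`d/dz [¼ (g(z) - 1)²] = -1 / (2 f⁻¹(z))`. Along a solution, with `z = λ̇²/a`, the derivative of
`ln λ + ¼ (g(z) - 1)²` is `λ̇/λ - λ̇ λ̈ / (a f⁻¹(z))`, which vanishes because `λ λ̈ = a f⁻¹(z)`.
A function with zero derivative on an open interval is constant.
-/

open Real Set Filter Topology

namespace Real

lemma mul_log_one_div_eq_negMulLog : (fun x => x * log (1 / x)) = negMulLog := by
  funext x
  rw [one_div, log_inv, negMulLog]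
  ring

lemma hasStrictDerivAt_negMulLog {x : ℝ} (hx : x ≠ 0) :
    HasStrictDerivAt negMulLog (-log x - 1) x := by
  have h := (hasStrictDerivAt_id x).neg.mul (hasStrictDerivAt_log hx)
  rw [negMulLog_def]
  exact h.congr_deriv (by simp only [Pi.neg_apply, id]; field_simp; ring)

lemma log_lt_neg_one_of_mem_Ioo {x : ℝ} (hx : x ∈ Ioo 0 (exp (-1))) : log x < -1 := by
  simpa using log_lt_log hx.1 hx.2

lemma strictMonoOn_negMulLog : StrictMonoOn negMulLog (Icc 0 (exp (-1))) := by
  refine strictMonoOn_of_deriv_pos (convex_Icc _ _) continuous_negMulLog.continuousOn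
    fun x hx => ?_
  rw [interior_Icc] at hx
  rw [deriv_negMulLog hx.1.ne']
  linarith [log_lt_neg_one_of_mem_Ioo hx]

lemma mapsTo_negMulLog_Ioo : MapsTo negMulLog (Ioo 0 (exp (-1))) (Ioo 0 (exp (-1))) := by
  intro x hx
  have hmem : x ∈ Icc 0 (exp (-1)) := Ioo_subset_Icc_self hx
  constructor
  · simpa using strictMonoOn_negMulLog (left_mem_Icc.2 (exp_pos _).le) hmem hx.1
  · have hfix : negMulLog (exp (-1)) = exp (-1) := by simp [negMulLog]
    simpa [hfix] using strictMonoOn_negMulLog hmem (right_mem_Icc.2 (exp_pos _).le) hx.2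

end Real

lemma ContDiffOn.hasDerivAt_of_isOpen {𝕜 E : Type*} [NontriviallyNormedField 𝕜]
    [NormedAddCommGroup E] [NormedSpace 𝕜 E] {f : 𝕜 → E} {s : Set 𝕜} {n : WithTop ℕ∞} {x : 𝕜}
    (hf : ContDiffOn 𝕜 n f s) (hn : n ≠ 0) (hs : IsOpen s) (hx : x ∈ s) :
    HasDerivAt f (deriv f x) x :=
  ((hf.differentiableOn hn x hx).differentiableAt (hs.mem_nhds hx)).hasDerivAt

section RightInverse

variable {finv : ℝ → ℝ}

lemma hasStrictDerivAt_of_rightInvOn_negMulLog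
    (hmaps : MapsTo finv (Ioo 0 (exp (-1))) (Ioo 0 (exp (-1))))
    (hright : RightInvOn finv negMulLog (Ioo 0 (exp (-1)))) {z : ℝ}
    (hz : z ∈ Ioo 0 (exp (-1))) :
    HasStrictDerivAt finv (-log (finv z) - 1)⁻¹ z := by
  have hx := hmaps hz
  have hderiv_ne : -log (finv z) - 1 ≠ 0 := by linarith [log_lt_neg_one_of_mem_Ioo hx]
  have hleft : ∀ᶠ y in 𝓝 (finv z), finv (negMulLog y) = y := by
    filter_upwards [isOpen_Ioo.mem_nhds hx] with y hy
    have hfy := mapsTo_negMulLog_Ioo hy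
    exact strictMonoOn_negMulLog.injOn (Ioo_subset_Icc_self (hmaps hfy))
      (Ioo_subset_Icc_self hy) (hright hfy)
  simpa [hright hz] using
    (hasStrictDerivAt_negMulLog (hx.1.ne')).to_local_left_inverse hderiv_ne hleft

lemma hasDerivAt_quarter_sq_div_rightInv_sub_one
    (hmaps : MapsTo finv (Ioo 0 (exp (-1))) (Ioo 0 (exp (-1))))
    (hright : RightInvOn finv negMulLog (Ioo 0 (exp (-1)))) {z : ℝ}
    (hz : z ∈ Ioo 0 (exp (-1))) :
    HasDerivAt (fun z => 1 / 4 * (z / finv z - 1) ^ 2) (-(2 * finv z)⁻¹) z := by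
  have hx := hmaps hz
  have hu : -log (finv z) - 1 ≠ 0 := by linarith [log_lt_neg_one_of_mem_Ioo hx]
  have hz_eq : z = -finv z * log (finv z) := (hright hz).symm
  have hfinv := (hasStrictDerivAt_of_rightInvOn_negMulLog hmaps hright hz).hasDerivAt
  refine ((((hasDerivAt_id' z).div hfinv hx.1.ne').sub_const 1).pow 2).const_mul (1 / 4)
    |>.congr_deriv ?_
  simp only [Pi.div_apply]
  generalize finv z = x at hx hu hz_eq ⊢
  subst hz_eq
  have hx0 : x ≠ 0 := hx.1.ne'
  field_simp
  ring

lemma hasDerivAt_log_add_quarter_sq_div_rightInv_sub_one {a : ℝ} (ha : a ≠ 0)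
    (hmaps : MapsTo finv (Ioo 0 (exp (-1))) (Ioo 0 (exp (-1))))
    (hright : RightInvOn finv negMulLog (Ioo 0 (exp (-1)))) {lam μ : ℝ → ℝ} {t μ' : ℝ}
    (hlam : HasDerivAt lam (μ t) t) (hμ : HasDerivAt μ μ' t) (hlam_ne : lam t ≠ 0)
    (hz : μ t ^ 2 / a ∈ Ioo 0 (exp (-1))) (hode : lam t * μ' = a * finv (μ t ^ 2 / a)) :
    HasDerivAt (fun s => log (lam s) + 1 / 4 * (μ s ^ 2 / a / finv (μ s ^ 2 / a) - 1) ^ 2)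
      0 t := by
  have hΦ := (hasDerivAt_quarter_sq_div_rightInv_sub_one hmaps hright hz).comp t
    ((hμ.pow 2).div_const a)
  refine ((hlam.log hlam_ne).add hΦ).congr_deriv ?_
  have hx0 : finv (μ t ^ 2 / a) ≠ 0 := (hmaps hz).1.ne'
  field_simp
  norm_num
  linear_combination (-2 * μ t) * hode

end RightInverse

/-- First integral of the exact scaling law: if `λλ̈ = a f⁻¹(λ̇²/a)` on an
interval `I` then `t ↦ ln λ + (1/4)(g(λ̇²/a) − 1)²` is constant on `I`, where
`f(x) = x ln(1/x)` and `g(z) = z/f⁻¹(z)`. -/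
theorem stmt_14 (a : ℝ) (ha : 0 < a) (f finv : ℝ → ℝ)
    (hf : f = fun x => x * Real.log (1/x))
    (hinv : ∀ z ∈ Set.Ioo (0:ℝ) (Real.exp (-1)),
      finv z ∈ Set.Ioo (0:ℝ) (Real.exp (-1)) ∧ f (finv z) = z)
    (g : ℝ → ℝ) (hg : g = fun z => z / finv z)
    (I : Set ℝ) (hIopen : IsOpen I) (hIconn : I.OrdConnected)
    (lam : ℝ → ℝ) (hlam : ContDiffOn ℝ 2 lam I) (hpos : ∀ t ∈ I, 0 < lam t)
    (hrange : ∀ t ∈ I, (deriv lam t)^2 / a ∈ Set.Ioo (0:ℝ) (Real.exp (-1)))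
    (hode : ∀ t ∈ I,
      lam t * deriv (deriv lam) t = a * finv ((deriv lam t)^2 / a)) :
    ∃ C : ℝ, ∀ t ∈ I,
      Real.log (lam t) + (1/4) * (g ((deriv lam t)^2 / a) - 1)^2 = C := by
  subst hf hg
  rw [mul_log_one_div_eq_negMulLog] at hinv
  have hderiv : ∀ t ∈ I, HasDerivAt (fun s => Real.log (lam s) +
      1 / 4 * ((deriv lam s) ^ 2 / a / finv ((deriv lam s) ^ 2 / a) - 1) ^ 2) 0 t :=
    fun t ht => hasDerivAt_log_add_quarter_sq_div_rightInv_sub_one ha.ne'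
      (fun z hz => (hinv z hz).1) (fun z hz => (hinv z hz).2)
      (hlam.hasDerivAt_of_isOpen two_ne_zero hIopen ht)
      ((hlam.deriv_of_isOpen hIopen le_rfl).hasDerivAt_of_isOpen one_ne_zero hIopen ht)
      (hpos t ht).ne' (hrange t ht) (hode t ht)
  exact hIopen.exists_is_const_of_deriv_eq_zero hIconn.isPreconnected
    (fun t ht => (hderiv t ht).differentiableAt.differentiableWithinAt)
    (fun t ht => (hderiv t ht).deriv)
end

section
/- Let a > 0, c > 0, t* ∈ ℝ, and let λ : I → (0,∞) be differentiable on an interval I ⊂ (−∞, t*) with 0 < λ(t) < c for all t ∈ I, and suppose √a·(t* − t) = ∫_0^{λ(t)} e^{√(ln(c/x))} dx for all t ∈ I. Then λ is twice differentiable on I, λ̇(t) < 0, 0 < λ̇(t)² < a, and λ(t)·λ̈(t)·ln(a/λ̇(t)²) = λ̇(t)² for all t ∈ I. -/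
open MeasureTheory Real Set Filter Topology

/-! With `σ(y) = √(log (c / y))`, the quadrature says that `t ↦ F (λ t)` is affine with slope
`-√a`, where `F' = exp ∘ σ`; the integrand is `O(y^{-1/2})` at `0`, so `F` is well defined.
Differentiating once gives `λ̇ = -√a · exp (-σ(λ))`, so `λ̇` is a smooth function of `λ`, and
differentiating again gives `λ̈ = λ̇² / (2 σ(λ) λ)`. Since `λ̇² = a · exp (-2 σ(λ))`, we have
`log (a / λ̇²) = 2 σ(λ)`, which turns the formula for `λ̈` into the ODE. -/

lemma exp_sqrt_log_div_le {c x : ℝ} (hx : 0 < x) (hxc : x ≤ c) :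
    exp √(log (c / x)) ≤ exp (1 / 2) * √c * x ^ (-(1 / 2) : ℝ) := by
  have hlog : 0 ≤ log (c / x) := log_nonneg ((one_le_div hx).2 hxc)
  have hamgm : √(log (c / x)) ≤ log (c / x) * (1 / 2) + 1 / 2 := by
    nlinarith [sq_sqrt hlog, sq_nonneg (√(log (c / x)) - 1)]
  calc exp √(log (c / x)) ≤ exp (log (c / x) * (1 / 2) + 1 / 2) := exp_le_exp.2 hamgm
    _ = exp (1 / 2) * √c * x ^ (-(1 / 2) : ℝ) := by
      rw [exp_add, exp_mul, exp_log (div_pos (hx.trans_le hxc) hx),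
        div_rpow (hx.trans_le hxc).le hx.le, rpow_neg hx.le, sqrt_eq_rpow, div_eq_mul_inv]
      ring

lemma integrableOn_exp_sqrt_log_div (c : ℝ) :
    IntegrableOn (fun x => exp √(log (c / x))) (Ioc 0 c) := by
  have hmajorant : IntegrableOn (fun x : ℝ => exp (1 / 2) * √c * x ^ (-(1 / 2) : ℝ)) (Ioc 0 c) :=
    ((intervalIntegral.intervalIntegrable_rpow' (by norm_num)).const_mul _).1
  refine hmajorant.mono' (Measurable.aestronglyMeasurable (by fun_prop)) ?_
  filter_upwards [ae_restrict_mem measurableSet_Ioc] with x ⟨hx, hxc⟩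
  rw [norm_of_nonneg (exp_pos _).le]
  exact exp_sqrt_log_div_le hx hxc

lemma hasDerivAt_integral_exp_sqrt_log_div {c y : ℝ} (hy : 0 < y) (hyc : y ≤ c) :
    HasDerivAt (fun u => ∫ x in (0 : ℝ)..u, exp √(log (c / x))) (exp √(log (c / y))) y :=
  intervalIntegral.integral_hasDerivAt_right
    ((intervalIntegrable_iff_integrableOn_Ioc_of_le hy.le).2
      ((integrableOn_exp_sqrt_log_div c).mono_set (Ioc_subset_Ioc_right hyc)))
    (Measurable.stronglyMeasurable (by fun_prop)).stronglyMeasurableAtFilter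
    (by
      have hcy : c / y ≠ 0 := (div_pos (hy.trans_le hyc) hy).ne'
      have := hy.ne'
      fun_prop (disch := assumption))

lemma hasDerivAt_exp_neg_sqrt_log_div {c y : ℝ} (hy : 0 < y) (hyc : y < c) :
    HasDerivAt (fun z => exp (-√(log (c / z))))
      (exp (-√(log (c / y))) / (2 * √(log (c / y)) * y)) y := by
  have hlog : HasDerivAt (fun z => log (c / z)) (-y⁻¹) y := by
    convert ((hasDerivAt_const y c).fun_div (hasDerivAt_id' y) hy.ne').log
      (div_pos (hy.trans hyc) hy).ne' using 1
    field_simp [(hy.trans hyc).ne']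
    ring
  have hsqrt := hlog.sqrt (log_pos ((one_lt_div hy).2 hyc)).ne'
  convert hsqrt.fun_neg.exp using 1
  field_simp

lemma deriv_eq_of_integral_comp_eq {a c tstar t : ℝ} {lam : ℝ → ℝ}
    (hlam : DifferentiableAt ℝ lam t) (hpos : 0 < lam t) (hle : lam t ≤ c)
    (hquad : ∀ᶠ u in 𝓝 t, √a * (tstar - u) = ∫ x in (0 : ℝ)..lam u, exp √(log (c / x))) :
    deriv lam t = -√a * exp (-√(log (c / lam t))) := by
  have hcomp := (hasDerivAt_integral_exp_sqrt_log_div hpos hle).comp t hlam.hasDerivAt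
  have hlin : HasDerivAt (fun u => √a * (tstar - u)) (-√a) t := by
    simpa using ((hasDerivAt_id t).const_sub tstar).const_mul √a
  have hslope : exp √(log (c / lam t)) * deriv lam t = -√a :=
    hcomp.unique (hlin.congr_of_eventuallyEq (hquad.mono fun _ hu => hu.symm))
  rw [exp_neg, ← hslope]
  field_simp

lemma neg_sqrt_mul_exp_neg_sq {a : ℝ} (ha : 0 ≤ a) (s : ℝ) :
    (-√a * exp (-s)) ^ 2 = a * exp (-(2 * s)) := by
  rw [mul_pow, neg_sq, sq_sqrt ha, ← exp_nat_mul]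
  congr 2
  push_cast
  ring

theorem stmt_16_general (a c tstar : ℝ) (ha : 0 < a)
    (I : Set ℝ) (hIopen : IsOpen I)
    (lam : ℝ → ℝ) (hdiff : ∀ t ∈ I, DifferentiableAt ℝ lam t)
    (hrange : ∀ t ∈ I, 0 < lam t ∧ lam t < c)
    (hquad : ∀ t ∈ I, Real.sqrt a * (tstar - t)
      = ∫ x in Set.Ioc (0:ℝ) (lam t), Real.exp (Real.sqrt (Real.log (c/x)))) :
    ∀ t ∈ I, DifferentiableAt ℝ (deriv lam) t ∧
      deriv lam t < 0 ∧ 0 < (deriv lam t)^2 ∧ (deriv lam t)^2 < a ∧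
      lam t * deriv (deriv lam) t * Real.log (a / (deriv lam t)^2)
        = (deriv lam t)^2 := by
  have hvel : ∀ u ∈ I, deriv lam u = -√a * exp (-√(log (c / lam u))) := fun u hu =>
    deriv_eq_of_integral_comp_eq (hdiff u hu) (hrange u hu).1 (hrange u hu).2.le <| by
      filter_upwards [hIopen.mem_nhds hu] with v hv
      rw [hquad v hv, intervalIntegral.integral_of_le (hrange v hv).1.le]
  intro t ht
  obtain ⟨hpos, hlt⟩ := hrange t ht
  have hs : 0 < √(log (c / lam t)) := sqrt_pos.2 (log_pos ((one_lt_div hpos).2 hlt))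
  have hacc : HasDerivAt (deriv lam) (deriv lam t ^ 2 / (2 * √(log (c / lam t)) * lam t)) t := by
    have hcomp := ((hasDerivAt_exp_neg_sqrt_log_div hpos hlt).comp t
      (hdiff t ht).hasDerivAt).const_mul (-√a)
    refine (hcomp.congr_of_eventuallyEq ?_).congr_deriv ?_
    · filter_upwards [hIopen.mem_nhds ht] with u hu using hvel u hu
    · rw [hvel t ht]
      field_simp
  have hsq : deriv lam t ^ 2 = a * exp (-(2 * √(log (c / lam t)))) := by
    rw [hvel t ht, neg_sqrt_mul_exp_neg_sq ha.le]
  have hlog : log (a / deriv lam t ^ 2) = 2 * √(log (c / lam t)) := by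
    rw [hsq, div_mul_cancel_left₀ ha.ne', ← exp_neg, neg_neg, log_exp]
  refine ⟨hacc.differentiableAt, ?_, by rw [hsq]; positivity, ?_, ?_⟩
  · rw [hvel t ht, neg_mul]
    exact neg_lt_zero.2 (by positivity)
  · rw [hsq]
    exact mul_lt_of_lt_one_right ha (exp_lt_one_iff.2 (by linarith))
  · rw [hacc.deriv, hlog]
    field_simp

/-- If `√a (t* − t) = ∫_0^{λ(t)} e^{√(ln(c/x))} dx` on an interval
`I ⊆ (−∞, t*)` with `0 < λ < c`, then `λ` is twice differentiable on `I`,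
`λ̇ < 0`, `0 < λ̇² < a` and `λλ̈ ln(a/λ̇²) = λ̇²` on `I`. -/
theorem stmt_16 (a c tstar : ℝ) (ha : 0 < a) (hc : 0 < c)
    (I : Set ℝ) (hIopen : IsOpen I) (hIconn : I.OrdConnected)
    (hIsub : I ⊆ Set.Iio tstar)
    (lam : ℝ → ℝ) (hdiff : ∀ t ∈ I, DifferentiableAt ℝ lam t)
    (hrange : ∀ t ∈ I, 0 < lam t ∧ lam t < c)
    (hquad : ∀ t ∈ I, Real.sqrt a * (tstar - t)
      = ∫ x in Set.Ioc (0:ℝ) (lam t), Real.exp (Real.sqrt (Real.log (c/x)))) :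
    ∀ t ∈ I, DifferentiableAt ℝ (deriv lam) t ∧
      deriv lam t < 0 ∧ 0 < (deriv lam t)^2 ∧ (deriv lam t)^2 < a ∧
      lam t * deriv (deriv lam) t * Real.log (a / (deriv lam t)^2)
        = (deriv lam t)^2 :=
  stmt_16_general a c tstar ha I hIopen lam hdiff hrange hquad
end

section
/- Let a > 0, c > 0, let f(x) = x·ln(1/x) with inverse f⁻¹ : (0, e⁻¹) → (0, e⁻¹) and g(z) = z/f⁻¹(z). Let λ : I → (0,∞) be twice continuously differentiable on an interval I with 0 < λ(t) < c, λ̇(t) < 0 and λ̇(t)²/a ∈ (0, e⁻¹) for all t ∈ I, and suppose g(λ̇(t)²/a) = 1 + 2·√(ln(c/λ(t))) for all t ∈ I. Then λ(t)·λ̈(t) = a·f⁻¹(λ̇(t)²/a) on I. -/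
/-!
Write `S = 1 + 2√(ln(c/λ))` and `w = f⁻¹(λ̇²/a)`. Since `g(f(w)) = f(w)/w = ln(1/w)`, the first
integral says `w = e^{-S}`, i.e. `λ̇²/a = S e^{-S}`. The derivative of `x ↦ S(x) e^{-S(x)}` is
`(1 - S) e^{-S} S'(x)`, and `1 - S = -2√(ln(c/x))` exactly cancels the square root in
`S'(x) = -1/(x√(ln(c/x)))`, leaving `2e^{-S}/x`. Differentiating `λ̇²/a = S(λ) e^{-S(λ)}` thus gives
`2λ̇λ̈/a = 2e^{-S}λ̇/λ`, and dividing by `2λ̇ ≠ 0` gives `λλ̈ = a e^{-S} = a w`. The square root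
is differentiable along `λ` because `w < e⁻¹` forces `S > 1`, i.e. `ln(c/λ) > 0`.
-/

open Real Filter Topology

noncomputable def firstIntegral (c x : ℝ) : ℝ := 1 + 2 * √(log (c / x))

lemma log_div_pos_of_one_lt_firstIntegral {c x : ℝ} (h : 1 < firstIntegral c x) :
    0 < log (c / x) := by
  unfold firstIntegral at h
  exact Real.sqrt_pos.mp (by linarith)

lemma hasDerivAt_firstIntegral {c x : ℝ} (hx : 0 < log (c / x)) :
    HasDerivAt (firstIntegral c) (-1 / (x * √(log (c / x)))) x := by
  have hcx : c / x ≠ 0 := fun h => by simp [h] at hx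
  have hx0 : x ≠ 0 := by rintro rfl; simp at hcx
  have hc0 : c ≠ 0 := by rintro rfl; simp at hcx
  have hlog : HasDerivAt (fun y => log (c / y)) (-x⁻¹) x :=
    ((hasDerivAt_inv hx0).const_mul c).log hcx |>.congr_deriv (by field_simp)
  exact (((hlog.sqrt hx.ne').const_mul 2).const_add 1).congr_deriv (by field_simp)

lemma hasDerivAt_mul_exp_neg (y : ℝ) :
    HasDerivAt (fun y => y * exp (-y)) ((1 - y) * exp (-y)) y :=
  ((hasDerivAt_id' y).fun_mul (hasDerivAt_id' y).fun_neg.exp).congr_deriv (by ring)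

lemma hasDerivAt_firstIntegral_mul_exp_neg {c x : ℝ} (hx : 0 < log (c / x)) :
    HasDerivAt (fun y => firstIntegral c y * exp (-firstIntegral c y))
      (2 * exp (-firstIntegral c x) / x) x := by
  refine ((hasDerivAt_mul_exp_neg _).comp x (hasDerivAt_firstIntegral hx)).congr_deriv ?_
  simp only [firstIntegral]
  field_simp
  ring

lemma eq_exp_neg_of_mul_log_inv_of_div {w z S : ℝ} (hw : 0 < w) (hf : w * log (1 / w) = z)
    (hg : z / w = S) : w = exp (-S) ∧ z = S * exp (-S) := by
  have hS : log (1 / w) = S := by rw [← hg, ← hf, mul_div_cancel_left₀ _ hw.ne']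
  have hwS : w = exp (-S) := by rw [← hS, one_div, log_inv, neg_neg, exp_log hw]
  exact ⟨hwS, by rw [← hf, hS, ← hwS, mul_comm]⟩

theorem stmt_17_general (a c : ℝ) (f finv : ℝ → ℝ)
    (hf : f = fun x => x * Real.log (1/x))
    (hinv : ∀ z ∈ Set.Ioo (0:ℝ) (Real.exp (-1)),
      finv z ∈ Set.Ioo (0:ℝ) (Real.exp (-1)) ∧ f (finv z) = z)
    (g : ℝ → ℝ) (hg : g = fun z => z / finv z)
    (I : Set ℝ) (hIopen : IsOpen I)
    (lam : ℝ → ℝ) (hlam : ContDiffOn ℝ 2 lam I)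
    (hz : ∀ t ∈ I, (deriv lam t)^2 / a ∈ Set.Ioo (0:ℝ) (Real.exp (-1)))
    (hfi : ∀ t ∈ I, g ((deriv lam t)^2 / a)
      = 1 + 2 * Real.sqrt (Real.log (c / lam t))) :
    ∀ t ∈ I, lam t * deriv (deriv lam) t = a * finv ((deriv lam t)^2 / a) := by
  subst hf hg
  have hfirst : ∀ s ∈ I, finv (deriv lam s ^ 2 / a) = exp (-firstIntegral c (lam s)) ∧
      deriv lam s ^ 2 / a = firstIntegral c (lam s) * exp (-firstIntegral c (lam s)) :=
    fun s hs => eq_exp_neg_of_mul_log_inv_of_div (hinv _ (hz s hs)).1.1 (hinv _ (hz s hs)).2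
      (hfi s hs)
  intro t ht
  have hI : I ∈ 𝓝 t := hIopen.mem_nhds ht
  have hS : 1 < firstIntegral c (lam t) := by
    have hw := (hinv _ (hz t ht)).1.2
    rwa [(hfirst t ht).1, exp_lt_exp, neg_lt_neg_iff] at hw
  have hL := log_div_pos_of_one_lt_firstIntegral hS
  have hz0 := (hz t ht).1
  have ha : a ≠ 0 := by rintro rfl; simp at hz0
  have hd : deriv lam t ≠ 0 := by intro h; simp [h] at hz0
  have hlam0 : lam t ≠ 0 := by rintro h; simp [h] at hL
  have hdlam : HasDerivAt lam (deriv lam t) t :=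
    ((hlam.contDiffAt hI).differentiableAt (by norm_num)).hasDerivAt
  have hddlam : HasDerivAt (deriv lam) (deriv (deriv lam) t) t :=
    (((hlam.deriv_of_isOpen hIopen (by norm_num : (1 : WithTop ℕ∞) + 1 ≤ 2)).contDiffAt
      hI).differentiableAt (by norm_num)).hasDerivAt
  have hlhs : HasDerivAt (fun s => deriv lam s ^ 2 / a)
      (2 * deriv lam t * deriv (deriv lam) t / a) t :=
    (hddlam.pow 2).div_const a |>.congr_deriv (by ring)
  have hrhs := (hasDerivAt_firstIntegral_mul_exp_neg hL).comp t hdlam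
  have heq := (hlhs.congr_of_eventuallyEq
    (eventually_of_mem hI fun s hs => ((hfirst s hs).2).symm)).unique hrhs
  rw [(hfirst t ht).1]
  field_simp at heq
  linear_combination heq

/-- Differentiating the first integral `g(λ̇²/a) = 1 + 2√(ln(c/λ))` recovers
the exact scaling equation `λλ̈ = a f⁻¹(λ̇²/a)`, where `f(x) = x ln(1/x)` and
`g(z) = z/f⁻¹(z)`. -/
theorem stmt_17 (a c : ℝ) (ha : 0 < a) (hc : 0 < c) (f finv : ℝ → ℝ)
    (hf : f = fun x => x * Real.log (1/x))
    (hinv : ∀ z ∈ Set.Ioo (0:ℝ) (Real.exp (-1)),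
      finv z ∈ Set.Ioo (0:ℝ) (Real.exp (-1)) ∧ f (finv z) = z)
    (g : ℝ → ℝ) (hg : g = fun z => z / finv z)
    (I : Set ℝ) (hIopen : IsOpen I) (hIconn : I.OrdConnected)
    (lam : ℝ → ℝ) (hlam : ContDiffOn ℝ 2 lam I)
    (hrange : ∀ t ∈ I, 0 < lam t ∧ lam t < c)
    (hneg : ∀ t ∈ I, deriv lam t < 0)
    (hz : ∀ t ∈ I, (deriv lam t)^2 / a ∈ Set.Ioo (0:ℝ) (Real.exp (-1)))
    (hfi : ∀ t ∈ I, g ((deriv lam t)^2 / a)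
      = 1 + 2 * Real.sqrt (Real.log (c / lam t))) :
    ∀ t ∈ I, lam t * deriv (deriv lam) t = a * finv ((deriv lam t)^2 / a) :=
  stmt_17_general a c f finv hf hinv g hg I hIopen lam hlam hz hfi
end

section
/- Let a > 0, let f(x) = x·ln(1/x) with inverse f⁻¹ : (0, e⁻¹) → (0, e⁻¹), let J ⊂ ℝ be an open interval with x²/a ∈ (0, e⁻¹) for all x ∈ J, and let h : J → ℝ be twice continuously differentiable with h''(x) = −1/f⁻¹(x²/a) on J. If λ : I → (0,∞) is twice continuously differentiable with λ̇(t) ∈ J for all t ∈ I and λ(t)·λ̈(t) = a·f⁻¹(λ̇(t)²/a) on I, then the energy t ↦ −λ̇(t)·h'(λ̇(t)) + h(λ̇(t)) − a·ln(λ(t)) is constant on I. -/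
/-!
Along a solution, `d/dt (−λ̇ h'(λ̇) + h(λ̇) − a ln λ) = −λ̇ (h''(λ̇) λ̈ + a/λ)`, and the equation of
motion `λ λ̈ = a f⁻¹(λ̇²/a)` combined with `h''(x) = −1/f⁻¹(x²/a)` makes the bracket vanish.
Hence the energy has zero derivative on the interval `I`, so it is constant there.
-/

open Real

theorem ContDiffOn.hasDerivAt_deriv_of_isOpen {g : ℝ → ℝ} {s : Set ℝ} (hg : ContDiffOn ℝ 2 g s)
    (hs : IsOpen s) {x : ℝ} (hx : x ∈ s) :
    HasDerivAt g (deriv g x) x ∧ HasDerivAt (deriv g) (deriv (deriv g) x) x :=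
  ⟨((hg.contDiffAt (hs.mem_nhds hx)).differentiableAt (by norm_num)).hasDerivAt,
    (((hg.deriv_of_isOpen (m := 1) hs (by norm_num)).contDiffAt (hs.mem_nhds hx)).differentiableAt
      (by norm_num)).hasDerivAt⟩

theorem hasDerivAt_energy (a : ℝ) {lam dlam h dh : ℝ → ℝ} {t ddlam ddh : ℝ}
    (hlam : HasDerivAt lam (dlam t) t) (hdlam : HasDerivAt dlam ddlam t)
    (hh : HasDerivAt h (dh (dlam t)) (dlam t)) (hdh : HasDerivAt dh ddh (dlam t))
    (hlam_ne : lam t ≠ 0) :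
    HasDerivAt (fun s => -dlam s * dh (dlam s) + h (dlam s) - a * log (lam s))
      (-dlam t * (ddh * ddlam + a / lam t)) t := by
  have hlog : HasDerivAt (fun s => log (lam s)) (dlam t / lam t) t := hlam.log hlam_ne
  refine (((hdlam.neg.mul (hdh.comp t hdlam)).add (hh.comp t hdlam)).sub
    (hlog.const_mul a)).congr_deriv ?_
  simp only [Function.comp_apply, Pi.neg_apply]
  ring

theorem stmt_18_general (a : ℝ) (f finv : ℝ → ℝ)
    (hinv : ∀ z ∈ Set.Ioo (0:ℝ) (Real.exp (-1)),
      finv z ∈ Set.Ioo (0:ℝ) (Real.exp (-1)) ∧ f (finv z) = z)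
    (J : Set ℝ) (hJopen : IsOpen J)
    (hJ : ∀ x ∈ J, x^2 / a ∈ Set.Ioo (0:ℝ) (Real.exp (-1)))
    (h : ℝ → ℝ) (hhC2 : ContDiffOn ℝ 2 h J)
    (hh'' : ∀ x ∈ J, deriv (deriv h) x = -1 / finv (x^2 / a))
    (I : Set ℝ) (hIopen : IsOpen I) (hIconn : I.OrdConnected)
    (lam : ℝ → ℝ) (hlam : ContDiffOn ℝ 2 lam I) (hpos : ∀ t ∈ I, 0 < lam t)
    (hJd : ∀ t ∈ I, deriv lam t ∈ J)
    (hode : ∀ t ∈ I,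
      lam t * deriv (deriv lam) t = a * finv ((deriv lam t)^2 / a)) :
    ∃ C : ℝ, ∀ t ∈ I,
      -deriv lam t * deriv h (deriv lam t) + h (deriv lam t)
        - a * Real.log (lam t) = C := by
  have henergy : ∀ t ∈ I, HasDerivAt (fun s => -deriv lam s * deriv h (deriv lam s)
      + h (deriv lam s) - a * log (lam s)) 0 t := by
    intro t ht
    obtain ⟨hlam₁, hlam₂⟩ := hlam.hasDerivAt_deriv_of_isOpen hIopen ht
    obtain ⟨hh₁, hh₂⟩ := hhC2.hasDerivAt_deriv_of_isOpen hJopen (hJd t ht)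
    have hfinv : 0 < finv (deriv lam t ^ 2 / a) := (hinv _ (hJ _ (hJd t ht))).1.1
    have hbalance : deriv (deriv h) (deriv lam t) * deriv (deriv lam) t + a / lam t = 0 := by
      rw [hh'' _ (hJd t ht)]
      field_simp [(hpos t ht).ne', hfinv.ne']
      linear_combination -hode t ht
    simpa [hbalance] using hasDerivAt_energy a hlam₁ hlam₂ hh₁ hh₂ (hpos t ht).ne'
  exact hIopen.exists_is_const_of_deriv_eq_zero hIconn.isPreconnected
    (fun t ht => (henergy t ht).differentiableAt.differentiableWithinAt)
    (fun t ht => (henergy t ht).deriv)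

/-- Hamiltonian structure: along solutions of `λλ̈ = a f⁻¹(λ̇²/a)` the energy
`E = −λ̇ h'(λ̇) + h(λ̇) − a ln λ` is conserved, where `h'' (x) = −1/f⁻¹(x²/a)`
and `f(x) = x ln(1/x)`. -/
theorem stmt_18 (a : ℝ) (ha : 0 < a) (f finv : ℝ → ℝ)
    (hf : f = fun x => x * Real.log (1/x))
    (hinv : ∀ z ∈ Set.Ioo (0:ℝ) (Real.exp (-1)),
      finv z ∈ Set.Ioo (0:ℝ) (Real.exp (-1)) ∧ f (finv z) = z)
    (J : Set ℝ) (hJopen : IsOpen J) (hJconn : J.OrdConnected)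
    (hJ : ∀ x ∈ J, x^2 / a ∈ Set.Ioo (0:ℝ) (Real.exp (-1)))
    (h : ℝ → ℝ) (hhC2 : ContDiffOn ℝ 2 h J)
    (hh'' : ∀ x ∈ J, deriv (deriv h) x = -1 / finv (x^2 / a))
    (I : Set ℝ) (hIopen : IsOpen I) (hIconn : I.OrdConnected)
    (lam : ℝ → ℝ) (hlam : ContDiffOn ℝ 2 lam I) (hpos : ∀ t ∈ I, 0 < lam t)
    (hJd : ∀ t ∈ I, deriv lam t ∈ J)
    (hode : ∀ t ∈ I,
      lam t * deriv (deriv lam) t = a * finv ((deriv lam t)^2 / a)) :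
    ∃ C : ℝ, ∀ t ∈ I,
      -deriv lam t * deriv h (deriv lam t) + h (deriv lam t)
        - a * Real.log (lam t) = C :=
  stmt_18_general a f finv hinv J hJopen hJ h hhC2 hh'' I hIopen hIconn lam hlam hpos hJd hode
end
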